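/- arXiv:1703.10044 — 2 statements merged into one kernel-verified Lean document; each statement's English description precedes it below -/
import Mathlib

section
/- Every modulus of continuity μ : ℕ → ℕ of the function f : [0,1] → ℝ, f(x) = Σ_{i=0}^∞ 2^(−i) · max{1 − |2^(2i+2)·x − 3|, 0}, satisfies μ(i+1) ≥ 2i+1 for every i ∈ ℕ; in particular, f admits no modulus of continuity bounded by m ↦ 2m − 2. -/
/-!
The `i`-th summand of `f` is a tent of height `2^(-i)` centred at `3 · 2^(-2i-2)` and supported
in `[2^(-2i-1), 2^(-2i)]`; these supports are pairwise disjoint and avoid `0`. Hence `f 0 = 0` while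
`f (3 · 2^(-2i-2)) = 2^(-i) > 2^(-(i+1))`, although the two points are within `2^(-2i)` of each
other. A modulus `μ` must therefore separate them at precision `i + 1`, i.e. `μ (i+1) > 2i`.
-/

open Set

def IsDyadicModulusOn (s : Set ℝ) (f : ℝ → ℝ) (μ : ℕ → ℕ) : Prop :=
  ∀ x ∈ s, ∀ y ∈ s, ∀ n : ℕ, |x - y| ≤ (2:ℝ)^(-(μ n : ℤ)) → |f x - f y| ≤ (2:ℝ)^(-(n:ℤ))

theorem IsDyadicModulusOn.lt_of_lt_abs_sub {s : Set ℝ} {f : ℝ → ℝ} {μ : ℕ → ℕ}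
    (hμ : IsDyadicModulusOn s f μ) {x y : ℝ} (hx : x ∈ s) (hy : y ∈ s) {m n : ℕ}
    (hxy : |x - y| ≤ (2:ℝ)^(-(m:ℤ))) (hf : (2:ℝ)^(-(n:ℤ)) < |f x - f y|) : m < μ n := by
  by_contra! h
  have : (2:ℝ)^(-(m:ℤ)) ≤ (2:ℝ)^(-(μ n : ℤ)) :=
    zpow_le_zpow_right₀ one_le_two (by omega)
  exact (hμ x hx y hy n (hxy.trans this)).not_gt hf

noncomputable def tentSeries (x : ℝ) : ℝ :=
  ∑' i : ℕ, (2:ℝ)^(-(i:ℤ)) * max (1 - |(2:ℝ)^(2*i+2) * x - 3|) 0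

noncomputable def tentPeak (i : ℕ) : ℝ := 3 * (2:ℝ)^(-(2*(i:ℤ)+2))

theorem tentSeries_zero : tentSeries 0 = 0 := by
  simp [tentSeries]

theorem one_le_abs_three_mul_four_zpow_sub_three {k : ℤ} (hk : k ≠ 0) :
    1 ≤ |3 * (4:ℝ)^k - 3| := by
  rcases hk.lt_or_gt with hk | hk
  · have : (4:ℝ)^k ≤ 4⁻¹ := by
      simpa using zpow_le_zpow_right₀ (by norm_num : (1:ℝ) ≤ 4) (show k ≤ -1 by omega)
    rw [abs_sub_comm, abs_of_nonneg (by linarith)]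
    linarith
  · have : (4:ℝ) ≤ 4^k := by
      simpa using zpow_le_zpow_right₀ (by norm_num : (1:ℝ) ≤ 4) (show 1 ≤ k by omega)
    rw [abs_of_nonneg (by linarith)]
    linarith

theorem two_pow_mul_tentPeak (i j : ℕ) :
    (2:ℝ)^(2*j+2) * tentPeak i = 3 * (4:ℝ)^((j:ℤ) - i) := by
  rw [tentPeak, show (4:ℝ) = 2^(2:ℤ) by norm_num, ← zpow_mul, ← zpow_natCast,
    mul_left_comm, ← zpow_add₀ two_ne_zero]
  congr 2
  push_cast
  ring

theorem tentSeries_tentPeak (i : ℕ) : tentSeries (tentPeak i) = (2:ℝ)^(-(i:ℤ)) := by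
  rw [tentSeries, tsum_eq_single i]
  · simp [two_pow_mul_tentPeak]
  · intro j hj
    rw [two_pow_mul_tentPeak, max_eq_right, mul_zero]
    have := one_le_abs_three_mul_four_zpow_sub_three (k := (j:ℤ) - i) (by omega)
    linarith

theorem tentPeak_le (i : ℕ) : tentPeak i ≤ (2:ℝ)^(-(2*(i:ℤ))) := by
  have h : (2:ℝ)^(-(2*(i:ℤ))) = 4 * (2:ℝ)^(-(2*(i:ℤ)+2)) := by
    rw [show (4:ℝ) = 2^(2:ℤ) by norm_num, ← zpow_add₀ two_ne_zero]
    ring_nf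
  rw [h, tentPeak]
  gcongr
  norm_num

theorem tentPeak_mem_Icc (i : ℕ) : tentPeak i ∈ Icc (0:ℝ) 1 :=
  ⟨by unfold tentPeak; positivity,
    (tentPeak_le i).trans (zpow_le_one_of_nonpos₀ one_le_two (by omega))⟩

theorem stmt_7
    (f : ℝ → ℝ)
    (hf : ∀ x, f x = ∑' i : ℕ, (2:ℝ)^(-(i:ℤ)) * max (1 - |(2:ℝ)^(2*i+2) * x - 3|) 0)
    (μ : ℕ → ℕ)
    (hμ : ∀ x ∈ Set.Icc (0:ℝ) 1, ∀ y ∈ Set.Icc (0:ℝ) 1, ∀ n : ℕ,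
      |x - y| ≤ (2:ℝ)^(-(μ n : ℤ)) → |f x - f y| ≤ (2:ℝ)^(-(n:ℤ))) :
    (∀ i : ℕ, μ (i+1) ≥ 2*i+1) ∧ ¬ (∀ n : ℕ, μ n ≤ 2*n - 2) := by
  obtain rfl : f = tentSeries := funext hf
  have lower : ∀ i : ℕ, μ (i+1) ≥ 2*i+1 := fun i => by
    have hdist : |0 - tentPeak i| ≤ (2:ℝ)^(-((2*i : ℕ) : ℤ)) := by
      rw [zero_sub, abs_neg, abs_of_nonneg (tentPeak_mem_Icc i).1]
      exact_mod_cast tentPeak_le i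
    have hjump : (2:ℝ)^(-((i+1 : ℕ) : ℤ)) < |tentSeries 0 - tentSeries (tentPeak i)| := by
      rw [tentSeries_zero, tentSeries_tentPeak, zero_sub, abs_neg, abs_of_pos (by positivity)]
      exact zpow_lt_zpow_right₀ one_lt_two (by omega)
    exact IsDyadicModulusOn.lt_of_lt_abs_sub hμ ⟨le_rfl, zero_le_one⟩ (tentPeak_mem_Icc i) hdist hjump
  refine ⟨lower, fun h => ?_⟩
  have : μ 1 ≥ 1 := lower 0
  have := h 1
  omega
end

section
/- The function f : [0,1] → ℝ defined by f(x) = Σ_{i=0}^∞ 2^(−i) · max{1 − |2^(2i+2)·x − 3|, 0} is Hölder continuous with exponent 1/2: there exists a constant C > 0 such that for all x, y ∈ [0,1], |f(x) − f(y)| ≤ C · |x − y|^(1/2). -/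
/-!
Write `f = ∑ gᵢ`, where `gᵢ` is `4 · 2ⁱ`-Lipschitz and takes values in `[0, 2⁻ⁱ]`. For `|x - y| = s²`,
estimate the first `N` terms of `∑ |gᵢ x - gᵢ y|` by the Lipschitz bounds and the rest by the
heights: this gives `4 (2ᴺ - 1) s² + 2 · 2⁻ᴺ`, and `2ᴺ ≈ 1 / s` makes both summands `O(s)`.
-/

open Finset

section SeriesOfBumps

variable {α : Type*} [PseudoMetricSpace α] {g : ℕ → α → ℝ}

lemma abs_tsum_sub_tsum_le_of_lipschitz_of_bounded (hg : ∀ x, Summable (g · x))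
    (hlip : ∀ i x y, |g i x - g i y| ≤ 4 * 2 ^ i * dist x y)
    (hbdd : ∀ i x y, |g i x - g i y| ≤ (1 / 2) ^ i) (N : ℕ) (x y : α) :
    |∑' i, g i x - ∑' i, g i y| ≤ 4 * (2 ^ N - 1) * dist x y + 2 * (1 / 2) ^ N := by
  have hdiff : Summable (fun i => |g i x - g i y|) := ((hg x).sub (hg y)).abs
  have hhead : ∑ i ∈ range N, 4 * 2 ^ i * dist x y = 4 * (2 ^ N - 1) * dist x y := by
    rw [← sum_mul, ← mul_sum, geom_sum_eq (by norm_num : (2:ℝ) ≠ 1)]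
    norm_num
  have htail : ∑' i, ((1:ℝ) / 2) ^ (i + N) = 2 * (1 / 2) ^ N := by
    simp_rw [pow_add]
    rw [tsum_mul_right, tsum_geometric_two]
  calc |∑' i, g i x - ∑' i, g i y| = |∑' i, (g i x - g i y)| := by
        rw [(hg x).tsum_sub (hg y)]
    _ ≤ ∑' i, |g i x - g i y| := norm_tsum_le_tsum_norm (E := ℝ) hdiff
    _ = ∑ i ∈ range N, |g i x - g i y| + ∑' i, |g (i + N) x - g (i + N) y| :=
        (hdiff.sum_add_tsum_nat_add N).symm
    _ ≤ ∑ i ∈ range N, 4 * 2 ^ i * dist x y + ∑' i, ((1:ℝ) / 2) ^ (i + N) :=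
        add_le_add (sum_le_sum fun i _ => hlip i x y)
          ((hdiff.comp_injective (add_left_injective N)).tsum_le_tsum (fun i => hbdd _ x y)
            (summable_geometric_two.comp_injective (add_left_injective N)))
    _ = 4 * (2 ^ N - 1) * dist x y + 2 * (1 / 2) ^ N := by rw [hhead, htail]

lemma exists_nat_four_mul_two_pow_sub_one_mul_sq_add_le {s : ℝ} (hs : 0 < s) :
    ∃ N : ℕ, 4 * (2 ^ N - 1) * s ^ 2 + 2 * (1 / 2) ^ N ≤ 8 * s := by
  rcases le_or_gt 1 s with h1 | h1
  · exact ⟨0, by norm_num; linarith⟩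
  obtain ⟨N, hN, hN1⟩ := exists_nat_pow_near (one_le_one_div hs h1.le) (by norm_num : (1:ℝ) < 2)
  refine ⟨N, ?_⟩
  have hp : (0:ℝ) < 2 ^ N := by positivity
  rw [le_div_iff₀ hs] at hN
  rw [div_lt_iff₀ hs, pow_succ] at hN1
  have hinv : 2 * (1 / 2 : ℝ) ^ N ≤ 4 * s := by
    rw [div_pow, one_pow, ← div_eq_mul_one_div, div_le_iff₀ hp]
    linarith
  nlinarith

lemma abs_tsum_sub_tsum_le_sqrt_dist (hg : ∀ x, Summable (g · x))
    (hlip : ∀ i x y, |g i x - g i y| ≤ 4 * 2 ^ i * dist x y)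
    (hbdd : ∀ i x y, |g i x - g i y| ≤ (1 / 2) ^ i) (x y : α) :
    |∑' i, g i x - ∑' i, g i y| ≤ 8 * √(dist x y) := by
  rcases (dist_nonneg (x := x) (y := y)).eq_or_lt with h | h
  · have hxy : ∀ i, g i x = g i y := fun i =>
      sub_eq_zero.mp (abs_nonpos_iff.mp (by simpa [← h] using hlip i x y))
    simp [hxy]
  obtain ⟨N, hN⟩ := exists_nat_four_mul_two_pow_sub_one_mul_sq_add_le (Real.sqrt_pos.2 h)
  rw [Real.sq_sqrt h.le] at hN
  exact (abs_tsum_sub_tsum_le_of_lipschitz_of_bounded hg hlip hbdd N x y).trans hN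

end SeriesOfBumps

noncomputable def tent (z : ℝ) : ℝ := max (1 - |z|) 0

lemma tent_nonneg (z : ℝ) : 0 ≤ tent z := le_max_right _ _

lemma tent_le_one (z : ℝ) : tent z ≤ 1 := max_le (by linarith [abs_nonneg z]) zero_le_one

lemma abs_tent_sub_tent_le (a b : ℝ) : |tent a - tent b| ≤ |a - b| :=
  calc |tent a - tent b| ≤ |(1 - |a|) - (1 - |b|)| := abs_max_sub_max_le_abs _ _ _
    _ = |(|b| - |a|)| := by ring_nf
    _ ≤ |b - a| := abs_abs_sub_abs_le_abs_sub b a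
    _ = |a - b| := abs_sub_comm b a

noncomputable def tentBump (i : ℕ) (x : ℝ) : ℝ := (2:ℝ) ^ (-(i:ℤ)) * tent (2 ^ (2 * i + 2) * x - 3)

lemma two_zpow_neg_natCast (i : ℕ) : (2:ℝ) ^ (-(i:ℤ)) = (1 / 2) ^ i := by
  rw [zpow_neg, zpow_natCast, one_div, inv_pow]

lemma tentBump_nonneg (i : ℕ) (x : ℝ) : 0 ≤ tentBump i x :=
  mul_nonneg (by positivity) (tent_nonneg _)

lemma tentBump_le (i : ℕ) (x : ℝ) : tentBump i x ≤ (1 / 2) ^ i := by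
  rw [tentBump, two_zpow_neg_natCast]
  exact mul_le_of_le_one_right (by positivity) (tent_le_one _)

lemma summable_tentBump (x : ℝ) : Summable (tentBump · x) :=
  summable_geometric_two.of_nonneg_of_le (tentBump_nonneg · x) (tentBump_le · x)

lemma abs_tentBump_sub_le (i : ℕ) (x y : ℝ) : |tentBump i x - tentBump i y| ≤ (1 / 2) ^ i :=
  abs_sub_le_of_nonneg_of_le (tentBump_nonneg i x) (tentBump_le i x)
    (tentBump_nonneg i y) (tentBump_le i y)

lemma abs_tentBump_sub_le_mul_dist (i : ℕ) (x y : ℝ) :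
    |tentBump i x - tentBump i y| ≤ 4 * 2 ^ i * dist x y := by
  have hscale : (1 / 2 : ℝ) ^ i * 2 ^ (2 * i + 2) = 4 * 2 ^ i := by
    rw [show (2:ℝ) ^ (2 * i + 2) = 2 ^ i * 2 ^ i * 4 by ring, div_pow, one_pow]
    field_simp
  calc |tentBump i x - tentBump i y|
      = (1 / 2) ^ i * |tent (2 ^ (2 * i + 2) * x - 3) - tent (2 ^ (2 * i + 2) * y - 3)| := by
        rw [tentBump, tentBump, two_zpow_neg_natCast, ← mul_sub, abs_mul, abs_of_pos (by positivity)]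
    _ ≤ (1 / 2) ^ i * |(2 ^ (2 * i + 2) * x - 3) - (2 ^ (2 * i + 2) * y - 3)| :=
        mul_le_mul_of_nonneg_left (abs_tent_sub_tent_le _ _) (by positivity)
    _ = 4 * 2 ^ i * dist x y := by
        rw [Real.dist_eq, ← hscale, sub_sub_sub_cancel_right, ← mul_sub, abs_mul,
          abs_of_pos (by positivity : (0:ℝ) < 2 ^ (2 * i + 2)), mul_assoc]

theorem stmt_8
    (f : ℝ → ℝ)
    (hf : ∀ x, f x = ∑' i : ℕ, (2:ℝ)^(-(i:ℤ)) * max (1 - |(2:ℝ)^(2*i+2) * x - 3|) 0) :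
    ∃ C : ℝ, 0 < C ∧ ∀ x ∈ Set.Icc (0:ℝ) 1, ∀ y ∈ Set.Icc (0:ℝ) 1,
      |f x - f y| ≤ C * |x - y| ^ ((1:ℝ)/2) := by
  have hf' : f = fun x => ∑' i, tentBump i x := funext hf
  refine ⟨8, by norm_num, fun x _ y _ => ?_⟩
  rw [hf', ← Real.sqrt_eq_rpow, ← Real.dist_eq]
  exact abs_tsum_sub_tsum_le_sqrt_dist summable_tentBump abs_tentBump_sub_le_mul_dist
    abs_tentBump_sub_le x y
end
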